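/- arXiv:2008.05999 — 2 statements merged into one kernel-verified Lean document; each statement's English description precedes it below -/
import Mathlib

section
/- Let Ω ⊆ ℝ^n be an open set, let X_1, …, X_N : Ω → ℝ^n be continuous vector fields, and let p > 1. Let u, v : Ω → ℝ be differentiable with v(x) ≠ 0 for all x ∈ Ω. Then L(u,v)(x) ≥ 0 for every x ∈ Ω. -/
/-!
`L(u,v)` is a pointwise quantity, and its nonnegativity is pure algebra at each point.
With `t = |u|/|v|`, the coefficient of the middle term has absolute value `t^(p-1)`, so by
Cauchy–Schwarz the middle term is at most `p ‖∇_X u‖ (t ‖∇_X v‖)^(p-1)`, and Young's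
inequality with exponents `p` and `p/(p-1)` bounds this by `‖∇_X u‖^p + (p-1) (t ‖∇_X v‖)^p`.
-/

open scoped RealInnerProductSpace

/-- The horizontal gradient `∇_X u (x) = (⟨X 1 x, ∇u x⟩, …, ⟨X N x, ∇u x⟩) ∈ ℝ^N`
associated with the family of vector fields `X : Fin N → ℝ^n → ℝ^n`. -/
noncomputable def gradX {n N : ℕ}
    (X : Fin N → EuclideanSpace ℝ (Fin n) → EuclideanSpace ℝ (Fin n))
    (u : EuclideanSpace ℝ (Fin n) → ℝ) (x : EuclideanSpace ℝ (Fin n)) :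
    EuclideanSpace ℝ (Fin N) :=
  (WithLp.equiv 2 (Fin N → ℝ)).symm fun k => ⟪X k x, gradient u x⟫

/-- `L(u,v)(x)` from Picone's identity for general vector fields.
Real exponents are interpreted via `Real.rpow`, so the term containing the factor
`‖∇_X v‖^{p−2}` is `0` where `∇_X v = 0`. -/
noncomputable def piconeL {n N : ℕ} (p : ℝ)
    (X : Fin N → EuclideanSpace ℝ (Fin n) → EuclideanSpace ℝ (Fin n))
    (u v : EuclideanSpace ℝ (Fin n) → ℝ) (x : EuclideanSpace ℝ (Fin n)) : ℝ :=
  ‖gradX X u x‖ ^ p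
    - p * ((|u x| ^ (p - 2) * u x) / (|v x| ^ (p - 2) * v x)) *
        (‖gradX X v x‖ ^ (p - 2) * ⟪gradX X v x, gradX X u x⟫)
    + (p - 1) * (|u x| ^ p / |v x| ^ p) * ‖gradX X v x‖ ^ p

namespace Real

variable {p : ℝ}

lemma young_mul_rpow_sub_one (hp : 1 < p) {x y : ℝ} (hx : 0 ≤ x) (hy : 0 ≤ y) :
    p * (x * y ^ (p - 1)) ≤ x ^ p + (p - 1) * y ^ p := by
  have hp₀ : 0 < p := by linarith
  have hp₁ : p - 1 ≠ 0 := by linarith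
  have young := young_inequality_of_nonneg hx (rpow_nonneg hy (p - 1))
    (HolderConjugate.conjExponent hp)
  have hy_pow : (y ^ (p - 1)) ^ conjExponent p = y ^ p := by
    rw [← rpow_mul hy, conjExponent]
    field_simp
  rw [hy_pow] at young
  calc p * (x * y ^ (p - 1)) ≤ p * (x ^ p / p + y ^ p / conjExponent p) := by gcongr
    _ = x ^ p + (p - 1) * y ^ p := by rw [conjExponent]; field_simp

lemma rpow_sub_two_mul_self (hp : p ≠ 1) {r : ℝ} (hr : 0 ≤ r) :
    r ^ (p - 2) * r = r ^ (p - 1) := by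
  rw [← rpow_add_one' hr (by contrapose! hp; linarith)]
  ring_nf

lemma abs_rpow_sub_two_mul_self (hp : p ≠ 1) (r : ℝ) :
    |(|r| ^ (p - 2) * r)| = |r| ^ (p - 1) := by
  rw [abs_mul, abs_of_nonneg (rpow_nonneg (abs_nonneg r) _),
    rpow_sub_two_mul_self hp (abs_nonneg r)]

end Real

lemma picone_pointwise_nonneg {E : Type*} [NormedAddCommGroup E] [InnerProductSpace ℝ E]
    {p : ℝ} (hp : 1 < p) (ξ η : E) {c t : ℝ} (ht : 0 ≤ t) (hc : |c| = t ^ (p - 1)) :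
    0 ≤ ‖ξ‖ ^ p - p * c * (‖η‖ ^ (p - 2) * ⟪η, ξ⟫) + (p - 1) * t ^ p * ‖η‖ ^ p := by
  have middle_le : c * (‖η‖ ^ (p - 2) * ⟪η, ξ⟫) ≤ ‖ξ‖ * (t * ‖η‖) ^ (p - 1) :=
    calc c * (‖η‖ ^ (p - 2) * ⟪η, ξ⟫)
        ≤ |c| * (‖η‖ ^ (p - 2) * |⟪η, ξ⟫|) := (le_abs_self _).trans_eq <| by
          rw [abs_mul, abs_mul, abs_of_nonneg (Real.rpow_nonneg (norm_nonneg η) _)]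
      _ ≤ t ^ (p - 1) * (‖η‖ ^ (p - 2) * (‖η‖ * ‖ξ‖)) := by
          rw [hc]
          gcongr
          exact abs_real_inner_le_norm η ξ
      _ = ‖ξ‖ * (t * ‖η‖) ^ (p - 1) := by
          rw [Real.mul_rpow ht (norm_nonneg η), ← mul_assoc (‖η‖ ^ (p - 2)),
            Real.rpow_sub_two_mul_self hp.ne' (norm_nonneg η)]
          ring
  have young := Real.young_mul_rpow_sub_one hp (norm_nonneg ξ) (mul_nonneg ht (norm_nonneg η))
  rw [Real.mul_rpow ht (norm_nonneg η) (z := p)] at young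
  nlinarith

theorem picone_nonneg_general {n N : ℕ} (p : ℝ) (hp : 1 < p)
    (Ω : Set (EuclideanSpace ℝ (Fin n)))
    (X : Fin N → EuclideanSpace ℝ (Fin n) → EuclideanSpace ℝ (Fin n))
    (u v : EuclideanSpace ℝ (Fin n) → ℝ) :
    ∀ x ∈ Ω, 0 ≤ piconeL p X u v x := by
  intro x _
  have hc : |(|u x| ^ (p - 2) * u x) / (|v x| ^ (p - 2) * v x)| =
      (|u x| / |v x|) ^ (p - 1) := by
    rw [abs_div, Real.abs_rpow_sub_two_mul_self hp.ne', Real.abs_rpow_sub_two_mul_self hp.ne',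
      Real.div_rpow (abs_nonneg _) (abs_nonneg _)]
  have ht : |u x| ^ p / |v x| ^ p = (|u x| / |v x|) ^ p :=
    (Real.div_rpow (abs_nonneg _) (abs_nonneg _) p).symm
  rw [piconeL, ht]
  exact picone_pointwise_nonneg hp _ _ (div_nonneg (abs_nonneg _) (abs_nonneg _)) hc

/-- **Picone inequality for general vector fields:** `L(u,v) ≥ 0` on `Ω`. -/
theorem picone_nonneg {n N : ℕ} (p : ℝ) (hp : 1 < p)
    (Ω : Set (EuclideanSpace ℝ (Fin n))) (hΩ : IsOpen Ω)
    (X : Fin N → EuclideanSpace ℝ (Fin n) → EuclideanSpace ℝ (Fin n))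
    (hX : ∀ k, ContinuousOn (X k) Ω)
    (u v : EuclideanSpace ℝ (Fin n) → ℝ)
    (hu : ∀ x ∈ Ω, DifferentiableAt ℝ u x)
    (hv : ∀ x ∈ Ω, DifferentiableAt ℝ v x)
    (hv0 : ∀ x ∈ Ω, v x ≠ 0) :
    ∀ x ∈ Ω, 0 ≤ piconeL p X u v x :=
  picone_nonneg_general p hp Ω X u v
end

section
/- Let Ω ⊆ ℝ^n be an open set, let X_1, …, X_N : Ω → ℝ^n be continuous vector fields, and let 1 < p < ∞. Let v ∈ C^1(Ω) with v(x) > 0 for all x ∈ Ω be a weak sub-solution of 𝓛_p v = 0 in Ω. Then for every nonnegative φ ∈ C_c^∞(Ω): ∫_Ω φ^p |∇_X v|^p dx ≤ p^p ∫_Ω v^p |∇_X φ|^p dx. -/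
open scoped RealInnerProductSpace

open MeasureTheory

/-- A weak sub-solution of `𝓛_p v = 0` in `Ω`:
`∫_Ω ‖∇_X v‖^{p−2} ⟨∇_X v, ∇_X φ⟩ ≤ 0` for every nonnegative
compactly supported `C¹` function `φ` with support in `Ω`. -/
def IsWeakSubSolutionZero {n N : ℕ} (p : ℝ)
    (X : Fin N → EuclideanSpace ℝ (Fin n) → EuclideanSpace ℝ (Fin n))
    (Ω : Set (EuclideanSpace ℝ (Fin n))) (v : EuclideanSpace ℝ (Fin n) → ℝ) : Prop :=
  ∀ φ : EuclideanSpace ℝ (Fin n) → ℝ, ContDiff ℝ 1 φ → HasCompactSupport φ →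
    tsupport φ ⊆ Ω → (∀ x, 0 ≤ φ x) →
    ∫ x in Ω, ‖gradX X v x‖ ^ (p - 2) * ⟪gradX X v x, gradX X φ x⟫ ≤ 0

section Helpers

open Set

lemma inner_gradient_eq' {E' : Type*} [NormedAddCommGroup E'] [InnerProductSpace ℝ E']
    [CompleteSpace E'] {f : E' → ℝ} {f' : E' →L[ℝ] ℝ} {x : E'} (h : HasFDerivAt f f' x)
    (y : E') : ⟪y, gradient f x⟫ = f' y := by
  rw [real_inner_comm, h.hasGradientAt.gradient, InnerProductSpace.toDual_symm_apply]

lemma rpow_sub_two_mul_sq' {t : ℝ} (ht : 0 ≤ t) {p : ℝ} (hp : p ≠ 0) :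
    t ^ (p - 2) * (t * t) = t ^ p := by
  rcases eq_or_lt_of_le ht with h | h
  · rw [← h, Real.zero_rpow hp, mul_zero, mul_zero]
  · have : t * t = t ^ (1:ℝ) * t ^ (1:ℝ) := by rw [Real.rpow_one]
    rw [this, ← Real.rpow_add h, ← Real.rpow_add h]
    norm_num

lemma rpow_sub_two_mul_self' {t : ℝ} (ht : 0 ≤ t) {p : ℝ} (hp1 : p - 1 ≠ 0) :
    t ^ (p - 2) * t = t ^ (p - 1) := by
  rcases eq_or_lt_of_le ht with h | h
  · rw [← h, Real.zero_rpow hp1, mul_zero]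
  · nth_rewrite 2 [← Real.rpow_one t]
    rw [← Real.rpow_add h, show p - 2 + 1 = p - 1 by ring]

lemma continuous_of_zero_outside' {F' : Type*} [TopologicalSpace F'] {X' : Type*}
    [TopologicalSpace X'] {f : X' → F'} {Ω K : Set X'} (hΩ : IsOpen Ω) (hK : IsClosed K)
    (hKΩ : K ⊆ Ω) (hf : ContinuousOn f Ω) {z : F'} (h0 : ∀ x ∉ K, f x = z) :
    Continuous f := by
  rw [continuous_iff_continuousAt]
  intro x
  by_cases hx : x ∈ Ω
  · exact hf.continuousAt (hΩ.mem_nhds hx)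
  · have hxK : x ∉ K := fun h => hx (hKΩ h)
    have hev : f =ᶠ[nhds x] fun _ => z :=
      Filter.eventually_of_mem (hK.isOpen_compl.mem_nhds hxK) h0
    exact (continuousAt_congr hev).mpr continuousAt_const

lemma gradX_combine' {n N : ℕ} {X : Fin N → EuclideanSpace ℝ (Fin n) → EuclideanSpace ℝ (Fin n)}
    {u w g : EuclideanSpace ℝ (Fin n) → ℝ} {x : EuclideanSpace ℝ (Fin n)} {a b : ℝ}
    {Du Dw : EuclideanSpace ℝ (Fin n) →L[ℝ] ℝ} (hu : HasFDerivAt u Du x)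
    (hw : HasFDerivAt w Dw x) (hg : HasFDerivAt g (a • Du + b • Dw) x) :
    gradX X g x = a • gradX X u x + b • gradX X w x := by
  unfold gradX
  ext k
  simp only [WithLp.equiv_symm_apply, PiLp.toLp_apply, PiLp.add_apply, PiLp.smul_apply, smul_eq_mul,
    inner_gradient_eq' hu, inner_gradient_eq' hw, inner_gradient_eq' hg,
    ContinuousLinearMap.add_apply, ContinuousLinearMap.coe_smul', Pi.smul_apply]

lemma gradX_eq_zero_of_eventually_zero' {n N : ℕ}
    {X : Fin N → EuclideanSpace ℝ (Fin n) → EuclideanSpace ℝ (Fin n)}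
    {f : EuclideanSpace ℝ (Fin n) → ℝ} {x : EuclideanSpace ℝ (Fin n)}
    (hx : f =ᶠ[nhds x] fun _ => 0) : gradX X f x = 0 := by
  have hg : gradient f x = 0 :=
    ((hasGradientAt_const x (0:ℝ)).congr_of_eventuallyEq hx).gradient
  unfold gradX
  ext k
  simp [hg]

lemma gradX_continuousOn' {n N : ℕ}
    {X : Fin N → EuclideanSpace ℝ (Fin n) → EuclideanSpace ℝ (Fin n)}
    {f : EuclideanSpace ℝ (Fin n) → ℝ} {Ω : Set (EuclideanSpace ℝ (Fin n))} (hΩ : IsOpen Ω)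
    (hX : ∀ k, ContinuousOn (X k) Ω) (hf : ContDiffOn ℝ 1 f Ω) :
    ContinuousOn (fun x => gradX X f x) Ω := by
  have hfd : ContinuousOn (fun x => fderiv ℝ f x) Ω :=
    hf.continuousOn_fderiv_of_isOpen hΩ le_rfl
  have hgrad : ContinuousOn (fun x => gradient f x) Ω := by
    have h : (fun x => gradient f x)
        = fun x => (InnerProductSpace.toDual ℝ (EuclideanSpace ℝ (Fin n))).symm
            (fderiv ℝ f x) := rfl
    rw [h]
    exact (InnerProductSpace.toDual ℝ (EuclideanSpace ℝ (Fin n))).symm.continuous.comp_continuousOn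
      hfd
  unfold gradX
  apply (PiLp.continuous_toLp 2 (fun _ : Fin N => ℝ)).comp_continuousOn
  apply continuousOn_pi.mpr
  intro k
  exact continuous_inner.comp_continuousOn ((hX k).prodMk hgrad)

lemma absorb' {A B p : ℝ} (hp : 1 < p) (hA : 0 ≤ A) (hB : 0 ≤ B)
    (h : A ≤ p * (A ^ (1/(p/(p-1))) * B ^ (1/p))) : A ≤ p ^ p * B := by
  have hp0 : (0:ℝ) < p := lt_trans one_pos hp
  have hp1 : (0:ℝ) < p - 1 := sub_pos.mpr hp
  rcases hA.eq_or_lt with h0 | hApos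
  · rw [← h0]
    exact mul_nonneg (Real.rpow_nonneg hp0.le _) hB
  · have hr : 1/(p/(p-1)) + 1/p = 1 := by field_simp; ring
    have hsplit : A ^ (1/(p/(p-1))) * A ^ (1/p) = A := by
      rw [← Real.rpow_add hApos, hr, Real.rpow_one]
    have hpow : 0 < A ^ (1/(p/(p-1))) := Real.rpow_pos_of_pos hApos _
    have key : A ^ (1/p) ≤ p * B ^ (1/p) := by
      have h2 : A ^ (1/(p/(p-1))) * A ^ (1/p) ≤ A ^ (1/(p/(p-1))) * (p * B ^ (1/p)) := by
        rw [hsplit]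
        calc A ≤ p * (A ^ (1/(p/(p-1))) * B ^ (1/p)) := h
          _ = A ^ (1/(p/(p-1))) * (p * B ^ (1/p)) := by ring
      exact le_of_mul_le_mul_left h2 hpow
    have e1 : A = (A ^ (1/p)) ^ p := by
      rw [← Real.rpow_mul hA, one_div, inv_mul_cancel₀ hp0.ne', Real.rpow_one]
    have e2 : (p * B ^ (1/p)) ^ p = p ^ p * B := by
      rw [Real.mul_rpow hp0.le (Real.rpow_nonneg hB _), ← Real.rpow_mul hB, one_div,
        inv_mul_cancel₀ hp0.ne', Real.rpow_one]
    calc A = (A ^ (1/p)) ^ p := e1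
      _ ≤ (p * B ^ (1/p)) ^ p := Real.rpow_le_rpow (Real.rpow_nonneg hA _) key hp0.le
      _ = p ^ p * B := e2

end Helpers

/-- **Caccioppoli inequality for general vector fields, case `q = p`, `λ = 0`:**
if `v > 0` is a weak sub-solution of `𝓛_p v = 0` in `Ω`, then for every nonnegative
`φ ∈ C_c^∞(Ω)`, `∫_Ω φ^p ‖∇_X v‖^p ≤ p^p ∫_Ω v^p ‖∇_X φ‖^p`. -/
theorem caccioppoli_inequality_zero {n N : ℕ} (p : ℝ) (hp : 1 < p)
    (Ω : Set (EuclideanSpace ℝ (Fin n))) (hΩ : IsOpen Ω)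
    (X : Fin N → EuclideanSpace ℝ (Fin n) → EuclideanSpace ℝ (Fin n))
    (hX : ∀ k, ContinuousOn (X k) Ω)
    (v : EuclideanSpace ℝ (Fin n) → ℝ)
    (hv : ContDiffOn ℝ 1 v Ω) (hvpos : ∀ x ∈ Ω, 0 < v x)
    (hsub : IsWeakSubSolutionZero p X Ω v) :
    ∀ φ : EuclideanSpace ℝ (Fin n) → ℝ, ContDiff ℝ (⊤ : ℕ∞) φ → HasCompactSupport φ →
      tsupport φ ⊆ Ω → (∀ x, 0 ≤ φ x) →
      ∫ x in Ω, φ x ^ p * ‖gradX X v x‖ ^ p ≤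
        p ^ p * ∫ x in Ω, v x ^ p * ‖gradX X φ x‖ ^ p := by
  
  intro φ hφ hφc hφΩ hφ0
  have hp0 : (0:ℝ) < p := lt_trans one_pos hp
  have hp1 : (0:ℝ) < p - 1 := sub_pos.mpr hp
  have hKc : IsCompact (tsupport φ) := hφc
  have hKcl : IsClosed (tsupport φ) := isClosed_tsupport φ
  have hφcont : Continuous φ := hφ.continuous
  have hφ1 : ContDiff ℝ 1 φ := hφ.of_le (by simp)
  have hφzero : ∀ x ∉ tsupport φ, φ x = 0 := fun _ hx => image_eq_zero_of_notMem_tsupport hx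
  have hGcont : ContinuousOn (fun x => gradX X v x) Ω := gradX_continuousOn' hΩ hX hv
  have hFcont : ContinuousOn (fun x => gradX X φ x) Ω :=
    gradX_continuousOn' hΩ hX hφ1.contDiffOn
  have hFzero : ∀ x ∉ tsupport φ, gradX X φ x = 0 := by
    intro x hx
    exact gradX_eq_zero_of_eventually_zero'
      (Filter.eventually_of_mem (hKcl.isOpen_compl.mem_nhds hx) hφzero)
  -- the test function ψ = φ^p * v
  have hψzero : ∀ x ∉ tsupport φ, φ x ^ p * v x = 0 := fun x hx => by
    rw [hφzero x hx, Real.zero_rpow hp0.ne', zero_mul]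
  have hψC1 : ContDiff ℝ 1 (fun x => φ x ^ p * v x) := by
    rw [contDiff_iff_contDiffAt]
    intro x
    by_cases hx : x ∈ Ω
    · have hrp : ContDiff ℝ ((1:ℕ):WithTop ℕ∞) (fun t : ℝ => t ^ p) :=
        Real.contDiff_rpow_const_of_le (by exact_mod_cast hp.le)
      rw [Nat.cast_one] at hrp
      have h1 : ContDiffAt ℝ 1 (fun y => φ y ^ p) x :=
        ContDiffAt.comp x hrp.contDiffAt hφ1.contDiffAt
      exact h1.mul (hv.contDiffAt (hΩ.mem_nhds hx))
    · have hxK : x ∉ tsupport φ := fun h => hx (hφΩ h)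
      have hev : (fun x => φ x ^ p * v x) =ᶠ[nhds x] fun _ => (0:ℝ) :=
        Filter.eventually_of_mem (hKcl.isOpen_compl.mem_nhds hxK) hψzero
      exact contDiffAt_const.congr_of_eventuallyEq hev
  have hψsupp : Function.support (fun x => φ x ^ p * v x) ⊆ Function.support φ := by
    intro x hx
    by_contra h
    apply hx
    show φ x ^ p * v x = 0
    rw [Function.notMem_support.mp h, Real.zero_rpow hp0.ne', zero_mul]
  have hψcs : HasCompactSupport (fun x => φ x ^ p * v x) := hφc.mono hψsupp
  have hψΩ : tsupport (fun x => φ x ^ p * v x) ⊆ Ω :=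
    subset_trans (closure_mono hψsupp) hφΩ
  have hψ0 : ∀ x, 0 ≤ φ x ^ p * v x := by
    intro x
    by_cases hx : x ∈ Ω
    · exact mul_nonneg (Real.rpow_nonneg (hφ0 x) p) (hvpos x hx).le
    · rw [hψzero x (fun h => hx (hφΩ h))]
  have hS := hsub (fun x => φ x ^ p * v x) hψC1 hψcs hψΩ hψ0
  -- derivative facts
  have hDv : ∀ x ∈ Ω, HasFDerivAt v (fderiv ℝ v x) x := fun x hx =>
    ((hv.contDiffAt (hΩ.mem_nhds hx)).differentiableAt one_ne_zero).hasFDerivAt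
  have hDφ : ∀ x : EuclideanSpace ℝ (Fin n), HasFDerivAt φ (fderiv ℝ φ x) x := fun x =>
    (hφ1.differentiable one_ne_zero x).hasFDerivAt
  have hgradψ : ∀ x ∈ Ω, gradX X (fun x => φ x ^ p * v x) x
      = (φ x ^ p) • gradX X v x + (p * φ x ^ (p-1) * v x) • gradX X φ x := by
    intro x hx
    have h1 : HasFDerivAt (fun y => φ y ^ p) ((p * φ x ^ (p-1)) • fderiv ℝ φ x) x :=
      (Real.hasDerivAt_rpow_const (Or.inr hp.le)).comp_hasFDerivAt x (hDφ x)
    have h2 := h1.mul (hDv x hx)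
    have h3 : HasFDerivAt (fun x => φ x ^ p * v x)
        ((φ x ^ p) • fderiv ℝ v x + (p * φ x ^ (p-1) * v x) • fderiv ℝ φ x) x := by
      rw [smul_smul, mul_comm (v x)] at h2
      exact h2
    exact gradX_combine' (hDv x hx) (hDφ x) h3
  -- pointwise expansion of the subsolution integrand
  have hpoint : ∀ x ∈ Ω,
      ‖gradX X v x‖ ^ (p-2) * ⟪gradX X v x, gradX X (fun x => φ x ^ p * v x) x⟫
      = φ x ^ p * ‖gradX X v x‖ ^ p
        + (p * φ x ^ (p-1) * v x) * (‖gradX X v x‖ ^ (p - 2) * ⟪gradX X v x, gradX X φ x⟫) := by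
    intro x hx
    rw [hgradψ x hx, inner_add_right, real_inner_smul_right, real_inner_smul_right,
      real_inner_self_eq_norm_mul_norm]
    have h := rpow_sub_two_mul_sq' (norm_nonneg (gradX X v x)) hp0.ne'
    linear_combination (φ x ^ p) * h
  -- integrability facts
  have hacont : Continuous (fun x => φ x ^ p * ‖gradX X v x‖ ^ p) := by
    apply continuous_of_zero_outside' hΩ hKcl hφΩ
    · exact ((Real.continuous_rpow_const hp0.le).comp hφcont).continuousOn.mul
        ((Real.continuous_rpow_const hp0.le).comp_continuousOn hGcont.norm)
    · intro x hx; rw [hφzero x hx, Real.zero_rpow hp0.ne', zero_mul]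
  have hacs : HasCompactSupport (fun x => φ x ^ p * ‖gradX X v x‖ ^ p) :=
    HasCompactSupport.intro hKc fun x hx => by
      rw [hφzero x hx, Real.zero_rpow hp0.ne', zero_mul]
  have haInt : IntegrableOn (fun x => φ x ^ p * ‖gradX X v x‖ ^ p) Ω :=
    (hacont.integrable_of_hasCompactSupport hacs).integrableOn
  have hccont : Continuous
      (fun x => (p * φ x ^ (p-1) * v x) * (‖gradX X v x‖ ^ (p - 1) * ‖gradX X φ x‖)) := by
    apply continuous_of_zero_outside' hΩ hKcl hφΩ
    · apply ContinuousOn.mul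
      · exact (((continuous_const.mul
          ((Real.continuous_rpow_const hp1.le).comp hφcont)).continuousOn).mul hv.continuousOn)
      · exact ((Real.continuous_rpow_const hp1.le).comp_continuousOn hGcont.norm).mul hFcont.norm
    · intro x hx
      rw [hφzero x hx, Real.zero_rpow hp1.ne', mul_zero, zero_mul, zero_mul]
  have hccs : HasCompactSupport
      (fun x => (p * φ x ^ (p-1) * v x) * (‖gradX X v x‖ ^ (p - 1) * ‖gradX X φ x‖)) :=
    HasCompactSupport.intro hKc fun x hx => by
      rw [hφzero x hx, Real.zero_rpow hp1.ne', mul_zero, zero_mul, zero_mul]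
  have hcInt : IntegrableOn
      (fun x => (p * φ x ^ (p-1) * v x) * (‖gradX X v x‖ ^ (p - 1) * ‖gradX X φ x‖)) Ω :=
    (hccont.integrable_of_hasCompactSupport hccs).integrableOn
  -- the middle integrand b, a.e.-measurable and dominated
  have hbound : ∀ x ∈ Ω,
      ‖(p * φ x ^ (p-1) * v x) * (‖gradX X v x‖ ^ (p - 2) * ⟪gradX X v x, gradX X φ x⟫)‖
      ≤ (p * φ x ^ (p-1) * v x) * (‖gradX X v x‖ ^ (p - 1) * ‖gradX X φ x‖) := by
    intro x hx
    have hco : 0 ≤ p * φ x ^ (p-1) * v x :=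
      mul_nonneg (mul_nonneg hp0.le (Real.rpow_nonneg (hφ0 x) _)) (hvpos x hx).le
    rw [Real.norm_eq_abs, abs_mul, abs_of_nonneg hco]
    apply mul_le_mul_of_nonneg_left _ hco
    rw [abs_mul, abs_of_nonneg (Real.rpow_nonneg (norm_nonneg _) _)]
    calc ‖gradX X v x‖ ^ (p-2) * |⟪gradX X v x, gradX X φ x⟫|
        ≤ ‖gradX X v x‖ ^ (p-2) * (‖gradX X v x‖ * ‖gradX X φ x‖) :=
          mul_le_mul_of_nonneg_left (abs_real_inner_le_norm _ _)
            (Real.rpow_nonneg (norm_nonneg _) _)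
      _ = ‖gradX X v x‖ ^ (p-1) * ‖gradX X φ x‖ := by
          rw [← mul_assoc, rpow_sub_two_mul_self' (norm_nonneg _) hp1.ne']
  have hbm : AEStronglyMeasurable
      (fun x => (p * φ x ^ (p-1) * v x) * (‖gradX X v x‖ ^ (p - 2) * ⟪gradX X v x, gradX X φ x⟫))
      (volume.restrict Ω) := by
    have hφm : AEMeasurable φ (volume.restrict Ω) := hφcont.aemeasurable
    have hvm : AEMeasurable v (volume.restrict Ω) :=
      hv.continuousOn.aemeasurable hΩ.measurableSet
    have hGm : AEMeasurable (fun x => ‖gradX X v x‖) (volume.restrict Ω) :=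
      hGcont.norm.aemeasurable hΩ.measurableSet
    have hipm : AEMeasurable (fun x => ⟪gradX X v x, gradX X φ x⟫) (volume.restrict Ω) :=
      (continuous_inner.comp_continuousOn (hGcont.prodMk hFcont)).aemeasurable hΩ.measurableSet
    exact (((aemeasurable_const.mul (hφm.pow aemeasurable_const)).mul hvm).mul
      ((hGm.pow aemeasurable_const).mul hipm)).aestronglyMeasurable
  have hbInt : IntegrableOn
      (fun x => (p * φ x ^ (p-1) * v x) * (‖gradX X v x‖ ^ (p - 2) * ⟪gradX X v x, gradX X φ x⟫))
      Ω := by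
    apply Integrable.mono' hcInt hbm
    exact (ae_restrict_iff' hΩ.measurableSet).mpr (Filter.Eventually.of_forall hbound)
  -- split the subsolution integral
  have hsplit : ∫ x in Ω,
      ‖gradX X v x‖ ^ (p-2) * ⟪gradX X v x, gradX X (fun x => φ x ^ p * v x) x⟫
      = (∫ x in Ω, φ x ^ p * ‖gradX X v x‖ ^ p)
        + ∫ x in Ω, (p * φ x ^ (p-1) * v x)
            * (‖gradX X v x‖ ^ (p - 2) * ⟪gradX X v x, gradX X φ x⟫) := by
    rw [← integral_add haInt hbInt]
    exact setIntegral_congr_fun hΩ.measurableSet hpoint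
  have hA_le : (∫ x in Ω, φ x ^ p * ‖gradX X v x‖ ^ p)
      ≤ ∫ x in Ω, (p * φ x ^ (p-1) * v x) * (‖gradX X v x‖ ^ (p - 1) * ‖gradX X φ x‖) := by
    have h1 : (∫ x in Ω, φ x ^ p * ‖gradX X v x‖ ^ p)
        + ∫ x in Ω, (p * φ x ^ (p-1) * v x)
            * (‖gradX X v x‖ ^ (p - 2) * ⟪gradX X v x, gradX X φ x⟫) ≤ 0 := by
      rw [← hsplit]; exact hS
    have h2 : (∫ x in Ω, φ x ^ p * ‖gradX X v x‖ ^ p)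
        ≤ ∫ x in Ω, -((p * φ x ^ (p-1) * v x)
            * (‖gradX X v x‖ ^ (p - 2) * ⟪gradX X v x, gradX X φ x⟫)) := by
      rw [integral_neg]; linarith
    refine h2.trans (setIntegral_mono_on hbInt.neg hcInt hΩ.measurableSet ?_)
    intro x hx
    exact (neg_le_abs _).trans ((Real.norm_eq_abs _) ▸ hbound x hx)
  -- Hölder
  have hf1cont : Continuous (fun x => φ x ^ (p-1) * ‖gradX X v x‖ ^ (p-1)) := by
    apply continuous_of_zero_outside' hΩ hKcl hφΩ
    · exact ((Real.continuous_rpow_const hp1.le).comp hφcont).continuousOn.mul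
        ((Real.continuous_rpow_const hp1.le).comp_continuousOn hGcont.norm)
    · intro x hx; rw [hφzero x hx, Real.zero_rpow hp1.ne', zero_mul]
  have hf1cs : HasCompactSupport (fun x => φ x ^ (p-1) * ‖gradX X v x‖ ^ (p-1)) :=
    HasCompactSupport.intro hKc fun x hx => by
      rw [hφzero x hx, Real.zero_rpow hp1.ne', zero_mul]
  have hg1cont : Continuous (fun x => v x * ‖gradX X φ x‖) := by
    apply continuous_of_zero_outside' hΩ hKcl hφΩ
    · exact hv.continuousOn.mul hFcont.norm
    · intro x hx; rw [hFzero x hx, norm_zero, mul_zero]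
  have hg1cs : HasCompactSupport (fun x => v x * ‖gradX X φ x‖) :=
    HasCompactSupport.intro hKc fun x hx => by rw [hFzero x hx, norm_zero, mul_zero]
  have hpq : (p/(p-1)).HolderConjugate p := (Real.HolderConjugate.conjExponent hp).symm
  have hold := integral_mul_le_Lp_mul_Lq_of_nonneg (μ := volume.restrict Ω) hpq
    (Filter.Eventually.of_forall fun x =>
      mul_nonneg (Real.rpow_nonneg (hφ0 x) _) (Real.rpow_nonneg (norm_nonneg _) _))
    ((ae_restrict_iff' hΩ.measurableSet).mpr (Filter.Eventually.of_forall fun x hx =>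
      mul_nonneg (hvpos x hx).le (norm_nonneg _)))
    ((hf1cont.memLp_of_hasCompactSupport hf1cs).restrict Ω)
    ((hg1cont.memLp_of_hasCompactSupport hg1cs).restrict Ω)
  -- rewrite the Hölder factors
  have hf1q : ∫ x in Ω, (φ x ^ (p-1) * ‖gradX X v x‖ ^ (p-1)) ^ (p/(p-1))
      = ∫ x in Ω, φ x ^ p * ‖gradX X v x‖ ^ p := by
    apply integral_congr_ae
    apply Filter.Eventually.of_forall
    intro x
    show (φ x ^ (p-1) * ‖gradX X v x‖ ^ (p-1)) ^ (p/(p-1)) = φ x ^ p * ‖gradX X v x‖ ^ p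
    rw [Real.mul_rpow (Real.rpow_nonneg (hφ0 x) _) (Real.rpow_nonneg (norm_nonneg _) _),
      ← Real.rpow_mul (hφ0 x), ← Real.rpow_mul (norm_nonneg _),
      show (p-1) * (p/(p-1)) = p by field_simp]
  have hg1p : ∫ x in Ω, (v x * ‖gradX X φ x‖) ^ p
      = ∫ x in Ω, v x ^ p * ‖gradX X φ x‖ ^ p := by
    apply setIntegral_congr_fun hΩ.measurableSet
    intro x hx
    show (v x * ‖gradX X φ x‖) ^ p = v x ^ p * ‖gradX X φ x‖ ^ p
    rw [Real.mul_rpow (hvpos x hx).le (norm_nonneg _)]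
  rw [hf1q, hg1p] at hold
  -- combine
  have hc_eq : ∫ x in Ω, (p * φ x ^ (p-1) * v x) * (‖gradX X v x‖ ^ (p - 1) * ‖gradX X φ x‖)
      = p * ∫ x in Ω, (φ x ^ (p-1) * ‖gradX X v x‖ ^ (p-1)) * (v x * ‖gradX X φ x‖) := by
    rw [← integral_const_mul]
    apply integral_congr_ae
    apply Filter.Eventually.of_forall
    intro x
    show p * φ x ^ (p-1) * v x * (‖gradX X v x‖ ^ (p - 1) * ‖gradX X φ x‖)
      = p * ((φ x ^ (p-1) * ‖gradX X v x‖ ^ (p-1)) * (v x * ‖gradX X φ x‖))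
    ring
  have hmain : (∫ x in Ω, φ x ^ p * ‖gradX X v x‖ ^ p)
      ≤ p * ((∫ x in Ω, φ x ^ p * ‖gradX X v x‖ ^ p) ^ (1/(p/(p-1)))
          * (∫ x in Ω, v x ^ p * ‖gradX X φ x‖ ^ p) ^ (1/p)) := by
    calc (∫ x in Ω, φ x ^ p * ‖gradX X v x‖ ^ p)
        ≤ ∫ x in Ω, (p * φ x ^ (p-1) * v x) * (‖gradX X v x‖ ^ (p - 1) * ‖gradX X φ x‖) := hA_le
      _ = p * ∫ x in Ω, (φ x ^ (p-1) * ‖gradX X v x‖ ^ (p-1)) * (v x * ‖gradX X φ x‖) := hc_eq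
      _ ≤ p * ((∫ x in Ω, φ x ^ p * ‖gradX X v x‖ ^ p) ^ (1/(p/(p-1)))
          * (∫ x in Ω, v x ^ p * ‖gradX X φ x‖ ^ p) ^ (1/p)) := by
          exact mul_le_mul_of_nonneg_left hold hp0.le
  have hA0 : 0 ≤ ∫ x in Ω, φ x ^ p * ‖gradX X v x‖ ^ p :=
    setIntegral_nonneg hΩ.measurableSet fun x _ =>
      mul_nonneg (Real.rpow_nonneg (hφ0 x) _) (Real.rpow_nonneg (norm_nonneg _) _)
  have hB0 : 0 ≤ ∫ x in Ω, v x ^ p * ‖gradX X φ x‖ ^ p :=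
    setIntegral_nonneg hΩ.measurableSet fun x hx =>
      mul_nonneg (Real.rpow_nonneg (hvpos x hx).le _) (Real.rpow_nonneg (norm_nonneg _) _)
  exact absorb' hp hA0 hB0 hmain
end
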